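/- arXiv:2303.15873 — 2 statements merged into one kernel-verified Lean document; each statement's English description precedes it below -/
import Mathlib

section
/- Let k be a natural number, let G be a finite simple graph, let M be the set of vertices of G of degree less than k, and let m = |M|. Let X' be a set of exactly k vertices of G such that every vertex of X' is not in M, has no neighbor in M, and has degree at least 2k - m - 1 in G. Then every vertex of G ⊕ (M ∪ X') has degree at least k. -/
/-- Subgraph complementation: `scompl G S` complements the subgraph of `G` induced by `S`. -/
def scompl {V : Type*} (G : SimpleGraph V) (S : Set V) : SimpleGraph V where
  Adj x y := x ≠ y ∧ ((x ∈ S ∧ y ∈ S ∧ ¬ G.Adj x y) ∨ (¬(x ∈ S ∧ y ∈ S) ∧ G.Adj x y))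
  symm := by
    constructor
    rintro x y ⟨hxy, h⟩
    refine ⟨hxy.symm, ?_⟩
    rcases h with ⟨hx, hy, h⟩ | ⟨h, hadj⟩
    · exact Or.inl ⟨hy, hx, fun h' => h (G.adj_symm h')⟩
    · exact Or.inr ⟨fun hc => h ⟨hc.2, hc.1⟩, G.adj_symm hadj⟩
  loopless := ⟨fun x h => h.1 rfl⟩

/-- Degree of a vertex in a finite simple graph. -/
noncomputable def deg {V : Type*} [Fintype V] (G : SimpleGraph V) (v : V) : ℕ :=
  (G.neighborSet v).ncard

/-- `a, b, c, d` form an induced diamond with `a`, `b` its degree-2 vertices. -/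
def IsDiamond {V : Type*} (G : SimpleGraph V) (a b c d : V) : Prop :=
  a ≠ b ∧ a ≠ c ∧ a ≠ d ∧ b ≠ c ∧ b ≠ d ∧ c ≠ d ∧
  G.Adj a c ∧ G.Adj a d ∧ G.Adj b c ∧ G.Adj b d ∧ G.Adj c d ∧ ¬ G.Adj a b

def DiamondFree {V : Type*} (G : SimpleGraph V) : Prop :=
  ∀ a b c d : V, ¬ IsDiamond G a b c d

/-- `r` together with the `t` distinct leaves `f 0, …, f (t-1)` forms an induced `K_{1,t}`
with center `r`. -/
def IsStar {V : Type*} (G : SimpleGraph V) (t : ℕ) (r : V) (f : Fin t → V) : Prop :=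
  Function.Injective f ∧ (∀ i, G.Adj r (f i)) ∧ ∀ i j, i ≠ j → ¬ G.Adj (f i) (f j)

def StarFree {V : Type*} (G : SimpleGraph V) (t : ℕ) : Prop :=
  ∀ (r : V) (f : Fin t → V), ¬ IsStar G t r f

/-! Every vertex outside `S = M ∪ X'` keeps its degree, which is at least `k` since it is not
in `M`. A vertex of `M` gains all of `X'` as neighbours, because `X'` has no edge to `M`. A vertex
`v ∈ X'` has degree `|S| + deg v - 1 - 2|N(v) ∩ S|` after the complementation; here `|S| = m + k`
and `N(v) ∩ S ⊆ X' \ {v}` has at most `k - 1` elements, so the degree condition on `X'` gives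
at least `k`. -/

section scompl

variable {V : Type*} {G : SimpleGraph V} {S : Set V} {v w : V}

theorem scompl_adj_of_not_adj (hv : v ∈ S) (hw : w ∈ S) (hne : v ≠ w) (h : ¬ G.Adj v w) :
    (scompl G S).Adj v w :=
  ⟨hne, Or.inl ⟨hv, hw, h⟩⟩

theorem scompl_adj_of_adj (h : G.Adj v w) (hS : ¬(v ∈ S ∧ w ∈ S)) : (scompl G S).Adj v w :=
  ⟨h.ne, Or.inr ⟨hS, h⟩⟩

theorem neighborSet_scompl_of_notMem (hv : v ∉ S) :
    (scompl G S).neighborSet v = G.neighborSet v := by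
  ext w
  refine ⟨fun ⟨_, h⟩ => h.elim (fun h => absurd h.1 hv) And.right, fun h => ?_⟩
  exact scompl_adj_of_adj h fun h => hv h.1

theorem neighborSet_scompl_of_mem (hv : v ∈ S) :
    (scompl G S).neighborSet v = (S \ insert v (G.neighborSet v)) ∪ (G.neighborSet v \ S) := by
  ext w
  simp only [SimpleGraph.mem_neighborSet, Set.mem_union, Set.mem_sdiff, Set.mem_insert_iff]
  constructor
  · rintro ⟨hne, ⟨-, hw, hadj⟩ | ⟨hS, hadj⟩⟩
    · exact Or.inl ⟨hw, by rintro (rfl | h) <;> contradiction⟩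
    · exact Or.inr ⟨hadj, fun hw => hS ⟨hv, hw⟩⟩
  · rintro (⟨hw, hw'⟩ | ⟨hadj, hw⟩)
    · exact scompl_adj_of_not_adj hv hw (fun h => hw' (Or.inl h.symm)) fun h => hw' (Or.inr h)
    · exact scompl_adj_of_adj hadj fun h => hw h.2

variable [Fintype V]

theorem ncard_neighborSet_inter_lt (hv : v ∈ S) : (G.neighborSet v ∩ S).ncard < S.ncard :=
  Set.ncard_lt_ncard <| Set.inter_subset_right.ssubset_of_not_subset
    fun h => G.loopless.irrefl v (h hv).1

theorem ncard_le_deg_of_subset {H : SimpleGraph V} {s : Set V} (h : s ⊆ H.neighborSet v) :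
    s.ncard ≤ deg H v :=
  Set.ncard_le_ncard h

theorem deg_scompl_of_notMem (hv : v ∉ S) : deg (scompl G S) v = deg G v :=
  congrArg Set.ncard (neighborSet_scompl_of_notMem hv)

theorem deg_scompl_of_mem (hv : v ∈ S) :
    deg (scompl G S) v + 1 + 2 * (G.neighborSet v ∩ S).ncard = S.ncard + deg G v := by
  rw [deg, deg, neighborSet_scompl_of_mem hv]
  set N := G.neighborSet v
  have hdisj : Disjoint (S \ insert v N) (N \ S) :=
    Set.disjoint_left.mpr fun w hw hw' => hw'.2 hw.1
  have hvN : v ∉ S ∩ N := fun h => G.loopless.irrefl v h.2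
  have hS := Set.ncard_inter_add_ncard_sdiff_eq_ncard S (insert v N)
  rw [Set.inter_insert_of_mem hv, Set.ncard_insert_of_notMem hvN, Set.inter_comm] at hS
  have hN := Set.ncard_inter_add_ncard_sdiff_eq_ncard N S
  rw [Set.ncard_union_eq hdisj]
  omega

end scompl

theorem stmt2 {V : Type*} [Fintype V] (k : ℕ) (G : SimpleGraph V)
    (M : Set V) (hM : M = {v : V | deg G v < k}) (m : ℕ) (hm : m = M.ncard)
    (X' : Set V) (hcard : X'.ncard = k)
    (hX' : ∀ x ∈ X', x ∉ M ∧ (∀ w ∈ M, ¬ G.Adj x w) ∧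
      (2 * (k : ℤ) - m - 1 ≤ (deg G x : ℤ))) :
    ∀ v : V, k ≤ deg (scompl G (M ∪ X')) v := by
  intro v
  have hMX : Disjoint M X' := Set.disjoint_right.mpr fun x hx => (hX' x hx).1
  by_cases hvS : v ∈ M ∪ X'
  · rcases hvS with hvM | hvX
    · refine hcard ▸ ncard_le_deg_of_subset fun x hx => ?_
      exact scompl_adj_of_not_adj (Or.inl hvM) (Or.inr hx) (hMX.ne_of_mem hvM hx)
        fun h => (hX' x hx).2.1 v hvM h.symm
    · obtain ⟨-, hvM, hdeg⟩ := hX' v hvX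
      have hcardS : (M ∪ X').ncard = m + k := by rw [Set.ncard_union_eq hMX, hm, hcard]
      have hNS : G.neighborSet v ∩ (M ∪ X') = G.neighborSet v ∩ X' := by
        have hNM : Disjoint (G.neighborSet v) M := Set.disjoint_right.mpr hvM
        rw [Set.inter_union_distrib_left, hNM.inter_eq, Set.empty_union]
      have hlt := ncard_neighborSet_inter_lt (G := G) hvX
      have hformula := deg_scompl_of_mem (G := G) (S := M ∪ X') (Or.inr hvX)
      rw [hNS, hcardS] at hformula
      omega
  · rw [deg_scompl_of_notMem hvS]
    simpa [hM] using fun h => hvS (Or.inl h)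
end

section
/- Let G be a finite simple graph and let S be an independent set of G such that G ⊕ S is diamond-free. Then for every induced diamond of G, both of its degree-2 vertices belong to S. -/
section

variable {V : Type*} {G : SimpleGraph V} {S : Set V} {x y : V}

theorem scompl_adj_iff_of_not_both_mem (h : ¬(x ∈ S ∧ y ∈ S)) :
    (scompl G S).Adj x y ↔ G.Adj x y := by
  constructor
  · rintro ⟨-, ⟨hx, hy, -⟩ | ⟨-, hadj⟩⟩
    · exact absurd ⟨hx, hy⟩ h
    · exact hadj
  · exact fun hadj => ⟨hadj.ne, Or.inr ⟨h, hadj⟩⟩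

theorem scompl_adj_of_adj_s7 (hind : ∀ x ∈ S, ∀ y ∈ S, ¬ G.Adj x y) (hadj : G.Adj x y) :
    (scompl G S).Adj x y :=
  (scompl_adj_iff_of_not_both_mem fun ⟨hx, hy⟩ => hind x hx y hy hadj).2 hadj

theorem IsDiamond.scompl {a b c d : V} (hind : ∀ x ∈ S, ∀ y ∈ S, ¬ G.Adj x y)
    (hD : IsDiamond G a b c d) (hab : ¬(a ∈ S ∧ b ∈ S)) : IsDiamond (scompl G S) a b c d := by
  obtain ⟨hab', hac, had, hbc, hbd, hcd, Aac, Aad, Abc, Abd, Acd, Nab⟩ := hD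
  exact ⟨hab', hac, had, hbc, hbd, hcd, scompl_adj_of_adj_s7 hind Aac, scompl_adj_of_adj_s7 hind Aad,
    scompl_adj_of_adj_s7 hind Abc, scompl_adj_of_adj_s7 hind Abd, scompl_adj_of_adj_s7 hind Acd,
    (scompl_adj_iff_of_not_both_mem hab).not.2 Nab⟩

end

theorem stmt7_general {V : Type*} (G : SimpleGraph V)
    (S : Set V) (hind : ∀ x ∈ S, ∀ y ∈ S, ¬ G.Adj x y)
    (hdf : DiamondFree (scompl G S)) :
    ∀ a b c d : V, IsDiamond G a b c d → a ∈ S ∧ b ∈ S := by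
  intro a b c d hD
  by_contra hab
  exact hdf a b c d (hD.scompl hind hab)

theorem stmt7 {V : Type*} [Fintype V] (G : SimpleGraph V)
    (S : Set V) (hind : ∀ x ∈ S, ∀ y ∈ S, ¬ G.Adj x y)
    (hdf : DiamondFree (scompl G S)) :
    ∀ a b c d : V, IsDiamond G a b c d → a ∈ S ∧ b ∈ S :=
  stmt7_general G S hind hdf
end
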